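/- arXiv:1509.04669 — 2 statements merged into one kernel-verified Lean document; each statement's English description precedes it below -/
import Mathlib

section
/- Let (Y,d_Y) be a compact metric space of diameter at most 2 with a continuous action of a finitely generated group Γ, and let the warped cone metric d_Γ be the warped metric on the cone O Y = [1,∞) × Y with cone metric d((t,y),(t',y')) = |t−t'| + min(t,t')·d_Y(y,y') and the action γ(t,y) = (t,γy). For s ≥ 1 let d_s denote the warped metric on Y coming from the scaled metric s·d_Y. Then for all s ≥ 1, t ≥ 0, and y, y' ∈ Y: d_Γ((s,y),(s+t,y')) = t + d_s(y,y'). -/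
open scoped BigOperators

noncomputable def wordLength {G : Type*} [Group G] (S : Set G) (g : G) : ℕ :=
  sInf {n : ℕ | ∃ f : Fin n → G, (∀ i, f i ∈ S ∨ (f i)⁻¹ ∈ S) ∧ (List.ofFn f).prod = g}

def chainSums {G : Type*} [Group G] {X : Type*} (S : Set G) (act : G → X → X)
    (d : X → X → ℝ) (x x' : X) : Set ℝ :=
  {c | ∃ (N : ℕ) (xs : Fin (N + 1) → X) (γs : Fin N → G),
    xs 0 = x ∧ xs (Fin.last N) = x' ∧
    c = ∑ i : Fin N, ((wordLength S (γs i) : ℝ) + d (act (γs i) (xs i.castSucc)) (xs i.succ))}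

/-- The warped (pseudo)distance obtained from the chain formula. -/
noncomputable def warpDist {G : Type*} [Group G] {X : Type*} (S : Set G) (act : G → X → X)
    (d : X → X → ℝ) (x x' : X) : ℝ :=
  sInf (chainSums S act d x x')

/-- The cone over `Y`: `[1,∞) × Y` with `d((t,y),(t',y')) = |t-t'| + min(t,t')·d_Y(y,y')`. -/
def coneDist {Y : Type*} [MetricSpace Y] (p q : {t : ℝ // 1 ≤ t} × Y) : ℝ :=
  |p.1.1 - q.1.1| + min p.1.1 q.1.1 * dist p.2 q.2

def coneAct {G Y : Type*} (act : G → Y → Y) (g : G) (p : {t : ℝ // 1 ≤ t} × Y) :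
    {t : ℝ // 1 ≤ t} × Y :=
  (p.1, act g p.2)


/-!
Write `Φ(p, q)` for the radial distance of two cone points plus the warped distance of their
`Y`-coordinates at the lower of their two levels. A chain on the cone at a fixed level is a chain
for `d_s`, and a final radial step costs `t`, so `d_Γ ≤ Φ`. Conversely `Φ` grows along a chain by
at most the cost of each step: a step that stays above the current lower level is paid for by
monotonicity of the warped distance in the scale, and a step dipping to a level `c` below it pays
twice the depth of the dip radially, which covers rescaling `d_c` back up because `diam Y ≤ 2`.
-/

open Finset

section WarpDist

variable {G : Type*} [Group G] {X : Type*} {S : Set G} {act : G → X → X}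
  {d d' : X → X → ℝ}

theorem wordLength_one (S : Set G) : wordLength S (1 : G) = 0 :=
  Nat.sInf_eq_zero.mpr (Or.inl ⟨Fin.elim0, fun i => i.elim0, by simp⟩)

theorem nonneg_of_mem_chainSums (hd : ∀ a b, 0 ≤ d a b) {x x' : X} {C : ℝ}
    (hC : C ∈ chainSums S act d x x') : 0 ≤ C := by
  obtain ⟨N, xs, γs, -, -, rfl⟩ := hC
  exact sum_nonneg fun i _ => add_nonneg (Nat.cast_nonneg _) (hd _ _)

theorem bddBelow_chainSums (hd : ∀ a b, 0 ≤ d a b) (x x' : X) :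
    BddBelow (chainSums S act d x x') :=
  ⟨0, fun _ => nonneg_of_mem_chainSums hd⟩

theorem mem_chainSums_self (hact1 : ∀ x, act 1 x = x) (x x' : X) :
    d x x' ∈ chainSums S act d x x' :=
  ⟨1, ![x, x'], ![1], rfl, rfl, by simp [wordLength_one, hact1]⟩

theorem snoc_mem_chainSums {x x' : X} {C : ℝ} (hC : C ∈ chainSums S act d x x') (γ : G)
    (x'' : X) : C + ((wordLength S γ : ℝ) + d (act γ x') x'') ∈ chainSums S act d x x'' := by
  obtain ⟨N, xs, γs, h0, hl, rfl⟩ := hC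
  refine ⟨N + 1, Fin.snoc xs x'', Fin.snoc γs γ, ?_, by simp, ?_⟩
  · rw [← Fin.castSucc_zero, Fin.snoc_castSucc, h0]
  · simp [Fin.sum_univ_castSucc, hl, -Fin.castSucc_succ, Fin.succ_castSucc]

theorem warpDist_le_of_mem (hd : ∀ a b, 0 ≤ d a b) {x x' : X} {C : ℝ}
    (hC : C ∈ chainSums S act d x x') : warpDist S act d x x' ≤ C :=
  csInf_le (bddBelow_chainSums hd x x') hC

theorem warpDist_nonneg (hd : ∀ a b, 0 ≤ d a b) (x x' : X) : 0 ≤ warpDist S act d x x' :=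
  Real.sInf_nonneg fun _ => nonneg_of_mem_chainSums hd

theorem warpDist_le (hact1 : ∀ x, act 1 x = x) (hd : ∀ a b, 0 ≤ d a b) (x x' : X) :
    warpDist S act d x x' ≤ d x x' :=
  warpDist_le_of_mem hd (mem_chainSums_self hact1 x x')

theorem le_warpDist_add (hact1 : ∀ x, act 1 x = x) {x x' : X} {r c : ℝ}
    (h : ∀ C ∈ chainSums S act d x x', r ≤ C + c) : r ≤ warpDist S act d x x' + c :=
  sub_le_iff_le_add.mp <|
    le_csInf ⟨_, mem_chainSums_self hact1 x x'⟩ fun C hC => sub_le_iff_le_add.mpr (h C hC)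

theorem warpDist_le_add_step (hact1 : ∀ x, act 1 x = x) (hd : ∀ a b, 0 ≤ d a b)
    (x x' x'' : X) (γ : G) :
    warpDist S act d x x''
      ≤ warpDist S act d x x' + ((wordLength S γ : ℝ) + d (act γ x') x'') :=
  le_warpDist_add hact1 fun _ hC => warpDist_le_of_mem hd (snoc_mem_chainSums hC γ x'')

theorem warpDist_mono (hact1 : ∀ x, act 1 x = x) (hd : ∀ a b, 0 ≤ d a b)
    (hdd' : ∀ a b, d a b ≤ d' a b) (x x' : X) :
    warpDist S act d x x' ≤ warpDist S act d' x x' := by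
  refine add_zero (warpDist S act d' x x') ▸ le_warpDist_add hact1 ?_
  rintro _ ⟨N, xs, γs, h0, hl, rfl⟩
  refine (warpDist_le_of_mem hd ⟨N, xs, γs, h0, hl, rfl⟩).trans ?_
  rw [add_zero]
  exact sum_le_sum fun i _ => add_le_add_right (hdd' _ _) _

end WarpDist

section Rescaling

variable {G : Type*} [Group G] {Y : Type*} [PseudoMetricSpace Y] {S : Set G} {act : G → Y → Y}

/-- A chain of total displacement `L ≤ D` costs at most `D (m - c)` more at scale `m`; otherwise
the one-step chain, of cost at most `m D`, is already cheap enough. -/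
theorem warpDist_mul_dist_le (hact1 : ∀ y, act 1 y = y) {D c m : ℝ}
    (hdiam : ∀ y y' : Y, dist y y' ≤ D) (hc : 0 ≤ c) (hcm : c ≤ m) (u v : Y) :
    warpDist S act (fun a b => m * dist a b) u v
      ≤ warpDist S act (fun a b => c * dist a b) u v + D * (m - c) := by
  have hm : 0 ≤ m := hc.trans hcm
  refine le_warpDist_add hact1 ?_
  rintro C ⟨N, xs, γs, h0, hl, hC⟩
  set L := ∑ i, dist (act (γs i) (xs i.castSucc)) (xs i.succ)
  have hcL : c * L ≤ C := by
    rw [hC, mul_sum]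
    exact sum_le_sum fun i _ => le_add_of_nonneg_left (Nat.cast_nonneg _)
  rcases le_total L D with hL | hL
  · calc warpDist S act (fun a b => m * dist a b) u v
        ≤ ∑ i, ((wordLength S (γs i) : ℝ)
            + m * dist (act (γs i) (xs i.castSucc)) (xs i.succ)) :=
          warpDist_le_of_mem (fun _ _ => by positivity) ⟨N, xs, γs, h0, hl, rfl⟩
      _ = C + (m - c) * L := by
          rw [hC, mul_sum, ← sum_add_distrib]
          exact sum_congr rfl fun _ _ => by ring
      _ ≤ C + D * (m - c) := by nlinarith
  · calc warpDist S act (fun a b => m * dist a b) u v ≤ m * dist u v :=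
          warpDist_le hact1 (fun _ _ => by positivity) u v
      _ ≤ m * D := mul_le_mul_of_nonneg_left (hdiam u v) hm
      _ ≤ C + D * (m - c) := by nlinarith

end Rescaling

theorem coneAct_one {G Y : Type*} [Group G] {act : G → Y → Y} (hact1 : ∀ y, act 1 y = y)
    (p : {t : ℝ // 1 ≤ t} × Y) : coneAct act (1 : G) p = p := by
  simp [coneAct, hact1]

section Cone

variable {G : Type*} [Group G] {Y : Type*} [MetricSpace Y] {S : Set G} {act : G → Y → Y}

theorem coneDist_nonneg (p q : {t : ℝ // 1 ≤ t} × Y) : 0 ≤ coneDist p q :=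
  add_nonneg (abs_nonneg _) (mul_nonneg (zero_le_one.trans (le_min p.1.2 q.1.2)) dist_nonneg)

/-- `Φ(p, q)`: the formula `t + d_s(y, y')` extended to arbitrary pairs of points of the cone. -/
noncomputable def coneWarpFormula (S : Set G) (act : G → Y → Y)
    (p q : {t : ℝ // 1 ≤ t} × Y) : ℝ :=
  |p.1.1 - q.1.1| + warpDist S act (fun a b => min p.1.1 q.1.1 * dist a b) p.2 q.2

theorem coneWarpFormula_self (hact1 : ∀ y, act 1 y = y) (p : {t : ℝ // 1 ≤ t} × Y) :
    coneWarpFormula S act p p = 0 := by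
  have hd : ∀ a b : Y, 0 ≤ min p.1.1 p.1.1 * dist a b := fun a b =>
    mul_nonneg (zero_le_one.trans (le_min p.1.2 p.1.2)) dist_nonneg
  have := warpDist_le (S := S) hact1 hd p.2 p.2
  rw [dist_self, mul_zero] at this
  simp only [coneWarpFormula, sub_self, abs_zero, zero_add]
  exact le_antisymm this (warpDist_nonneg hd _ _)

theorem abs_sub_add_two_mul_min_sub_le (a b c : ℝ) :
    |a - b| + 2 * (min a b - min (min a b) c) ≤ |a - c| + |c - b| := by
  grind

theorem coneWarpFormula_le_add_step (hdiam : ∀ y y' : Y, dist y y' ≤ 2)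
    (hact1 : ∀ y, act 1 y = y) (p q r : {t : ℝ // 1 ≤ t} × Y) (γ : G) :
    coneWarpFormula S act p r
      ≤ coneWarpFormula S act p q
        + ((wordLength S γ : ℝ) + coneDist (coneAct act γ q) r) := by
  obtain ⟨⟨a, ha⟩, u⟩ := p
  obtain ⟨⟨c, hc⟩, w⟩ := q
  obtain ⟨⟨b, hb⟩, v⟩ := r
  simp only [coneWarpFormula, coneDist, coneAct]
  set m := min a b
  -- `m - m'` is how far the step dips below the lower level `m` of `p` and `r`.
  set m' := min m c
  have hm' : 1 ≤ m' := le_min (le_min ha hb) hc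
  have hm'm : m' ≤ m := min_le_left _ _
  have hm'c : m' ≤ c := min_le_right _ _
  have hdist : warpDist S act (fun x y => m * dist x y) u v
      ≤ warpDist S act (fun x y => min a c * dist x y) u w
        + ((wordLength S γ : ℝ) + min c b * dist (act γ w) v) + 2 * (m - m') :=
    calc warpDist S act (fun x y => m * dist x y) u v
        ≤ warpDist S act (fun x y => m' * dist x y) u v + 2 * (m - m') :=
          warpDist_mul_dist_le hact1 hdiam (by linarith) hm'm u v
      _ ≤ warpDist S act (fun x y => m' * dist x y) u w
            + ((wordLength S γ : ℝ) + m' * dist (act γ w) v) + 2 * (m - m') := by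
          gcongr
          exact warpDist_le_add_step hact1 (fun _ _ => by positivity) u w v γ
      _ ≤ warpDist S act (fun x y => min a c * dist x y) u w
            + ((wordLength S γ : ℝ) + min c b * dist (act γ w) v) + 2 * (m - m') := by
          gcongr ?_ + (_ + ?_) + _
          · exact warpDist_mono hact1 (fun _ _ => by positivity)
              (fun _ _ => by gcongr; exact le_min (hm'm.trans (min_le_left _ _)) hm'c) u w
          · exact mul_le_mul_of_nonneg_right (le_min hm'c (hm'm.trans (min_le_right _ _)))
              dist_nonneg
  linarith [abs_sub_add_two_mul_min_sub_le a b c]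

theorem coneWarpFormula_le_sum (hdiam : ∀ y y' : Y, dist y y' ≤ 2)
    (hact1 : ∀ y, act 1 y = y) {N : ℕ} (xs : Fin (N + 1) → {t : ℝ // 1 ≤ t} × Y)
    (γs : Fin N → G) :
    coneWarpFormula S act (xs 0) (xs (Fin.last N))
      ≤ ∑ i, ((wordLength S (γs i) : ℝ)
          + coneDist (coneAct act (γs i) (xs i.castSucc)) (xs i.succ)) := by
  induction N with
  | zero => exact (coneWarpFormula_self hact1 _).le
  | succ N ih =>
    rw [Fin.sum_univ_castSucc, Fin.succ_last]
    simp only [Fin.succ_castSucc]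
    calc coneWarpFormula S act (xs 0) (xs (Fin.last (N + 1)))
        ≤ coneWarpFormula S act (xs 0) (xs (Fin.last N).castSucc)
          + ((wordLength S (γs (Fin.last N)) : ℝ)
            + coneDist (coneAct act (γs (Fin.last N)) (xs (Fin.last N).castSucc))
              (xs (Fin.last (N + 1)))) :=
          coneWarpFormula_le_add_step hdiam hact1 _ _ _ _
      _ ≤ _ := by
          gcongr
          exact ih (fun i => xs i.castSucc) (fun i => γs i.castSucc)

theorem coneWarpFormula_le_warpDist (hdiam : ∀ y y' : Y, dist y y' ≤ 2)
    (hact1 : ∀ y, act 1 y = y) (p q : {t : ℝ // 1 ≤ t} × Y) :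
    coneWarpFormula S act p q ≤ warpDist S (coneAct act) coneDist p q := by
  refine le_csInf ⟨_, mem_chainSums_self (coneAct_one hact1) p q⟩ ?_
  rintro _ ⟨N, xs, γs, rfl, rfl, rfl⟩
  exact coneWarpFormula_le_sum hdiam hact1 xs γs

theorem mem_chainSums_coneAct_of_mem {s : ℝ} (hs : 1 ≤ s) {y y' : Y} {C : ℝ}
    (hC : C ∈ chainSums S act (fun a b => s * dist a b) y y') :
    C ∈ chainSums S (coneAct act) coneDist (⟨s, hs⟩, y) (⟨s, hs⟩, y') := by
  obtain ⟨N, xs, γs, h0, hl, rfl⟩ := hC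
  refine ⟨N, fun i => (⟨s, hs⟩, xs i), γs, by simp [h0], by simp [hl], ?_⟩
  simp [coneDist, coneAct]

theorem warpDist_coneAct_le_coneWarpFormula (hact1 : ∀ y, act 1 y = y)
    {p q : {t : ℝ // 1 ≤ t} × Y} (hpq : p.1 ≤ q.1) :
    warpDist S (coneAct act) coneDist p q ≤ coneWarpFormula S act p q := by
  obtain ⟨⟨a, ha⟩, u⟩ := p
  obtain ⟨⟨b, hb⟩, v⟩ := q
  have hab : a ≤ b := hpq
  rw [coneWarpFormula, add_comm, min_eq_left hab]
  refine le_warpDist_add hact1 fun C hC => ?_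
  have hstep :=
    snoc_mem_chainSums (mem_chainSums_coneAct_of_mem ha hC) (1 : G) (⟨b, hb⟩, v)
  rw [coneAct_one hact1] at hstep
  simp only [wordLength_one, coneDist, dist_self, mul_zero, add_zero, Nat.cast_zero,
    zero_add] at hstep
  exact warpDist_le_of_mem coneDist_nonneg hstep

end Cone

/-- `d_Γ((s,y),(s+t,y')) = t + d_s(y,y')`. -/
theorem warped_cone_metric_formula {Y : Type*} [MetricSpace Y]
    (hdiam : ∀ y y' : Y, dist y y' ≤ 2)
    {G : Type*} [Group G] (S : Set G)
    (act : G → Y → Y)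
    (hact1 : ∀ y, act 1 y = y) :
    ∀ (s t : ℝ) (hs : 1 ≤ s) (ht : 0 ≤ t) (y y' : Y),
      warpDist S (coneAct act) coneDist (⟨⟨s, hs⟩, y⟩) (⟨⟨s + t, by linarith⟩, y'⟩)
        = t + warpDist S act (fun a b => s * dist a b) y y' := by
  intro s t hs ht y y'
  have hformula : coneWarpFormula S act (⟨⟨s, hs⟩, y⟩) (⟨⟨s + t, by linarith⟩, y'⟩)
      = t + warpDist S act (fun a b => s * dist a b) y y' := by
    simp [coneWarpFormula, abs_of_nonneg ht, ht]
  rw [← hformula]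
  exact le_antisymm (warpDist_coneAct_le_coneWarpFormula hact1 (by simpa using ht))
    (coneWarpFormula_le_warpDist hdiam hact1 _ _)
end

section
/- Let Γ act on a proper metric space (Y,d), let y, y' lie in the same Γ-orbit, and let N be the minimal word length of γ ∈ Γ with y' = γy. Define δ_n(y,y') as the minimal total metric cost of connecting y to y' with at most n applications of generators (as in the warped metric formula). If δ_n(y,y') > 0 for all n < N, then for all s ≥ max_{n<N} (N−n)/δ_n(y,y'), the warped metric on (Y, s·d) satisfies d_s(y,y') = N. -/
/-!
A chain of the warped metric through group elements `γ₀, …, γ_{M-1}` of total word length `W`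
and total distance `D` costs `W + s D`. Spelling each `γᵢ` out as a word in `S` turns it into a
competitor for `δ_W(y, y')` of cost at most `D` (generator moves are free), so every chain costs
at least `W + s δ_W(y, y')`. This is at least `N` when `W ≥ N`, and also when `W < N` by the
choice of `s`. The one-step chain through `γ` with `γ y = y'` and word length `N` costs exactly `N`.
-/

open scoped BigOperators

/-- `δ_n(y,y')`: the minimal cost `∑_{i=0}^n d(y_{2i}, y_{2i+1})` over sequences
`y₀ = y, …, y_{2n+1} = y'` with `y_{2i} = s·y_{2i-1}` for some `s ∈ S`
(the sequence is encoded as `n+1` consecutive pairs `(y_{2i}, y_{2i+1})`). -/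
noncomputable def deltaCost {G : Type*} [Group G] {Y : Type*} [MetricSpace Y]
    (S : Set G) (act : G → Y → Y) (n : ℕ) (y y' : Y) : ℝ :=
  sInf {c | ∃ ys : Fin (n + 1) → Y × Y,
    (ys 0).1 = y ∧ (ys (Fin.last n)).2 = y' ∧
    (∀ i : Fin n, ∃ s ∈ S, (ys i.succ).1 = act s ((ys i.castSucc).2)) ∧
    c = ∑ i : Fin (n + 1), dist (ys i).1 (ys i).2}

section Chains

variable {G : Type*} {Y : Type*} [MetricSpace Y] {S : Set G} {act : G → Y → Y}

variable (S act) in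
def deltaCostSet (n : ℕ) (y y' : Y) : Set ℝ :=
  {c | ∃ ys : Fin (n + 1) → Y × Y,
    (ys 0).1 = y ∧ (ys (Fin.last n)).2 = y' ∧
    (∀ i : Fin n, ∃ s ∈ S, (ys i.succ).1 = act s ((ys i.castSucc).2)) ∧
    c = ∑ i : Fin (n + 1), dist (ys i).1 (ys i).2}

theorem nonneg_of_mem_deltaCostSet {n : ℕ} {y y' : Y} {c : ℝ}
    (hc : c ∈ deltaCostSet S act n y y') : 0 ≤ c := by
  obtain ⟨ys, -, -, -, rfl⟩ := hc
  exact Finset.sum_nonneg fun i _ => dist_nonneg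

theorem zero_mem_deltaCostSet_zero (y : Y) : (0 : ℝ) ∈ deltaCostSet S act 0 y y :=
  ⟨fun _ => (y, y), rfl, rfl, fun i => i.elim0, by simp⟩

/-- A generator step costs nothing: append the pair `(act s z, act s z)`. -/
theorem mem_deltaCostSet_succ_act {n : ℕ} {y z : Y} {c : ℝ} {s : G} (hs : s ∈ S)
    (hc : c ∈ deltaCostSet S act n y z) : c ∈ deltaCostSet S act (n + 1) y (act s z) := by
  obtain ⟨ys, h0, hlast, hstep, rfl⟩ := hc
  refine ⟨Fin.snoc ys (act s z, act s z), ?_, by simp, ?_, ?_⟩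
  · rwa [← Fin.castSucc_zero, Fin.snoc_castSucc]
  · refine Fin.lastCases ⟨s, hs, by simp [hlast]⟩ fun i => ?_
    rw [Fin.succ_castSucc, Fin.snoc_castSucc, Fin.snoc_castSucc]
    exact hstep i
  · simp [Fin.sum_univ_castSucc]

/-- Replace the second point of the last pair by `x'` and use the triangle inequality. -/
theorem exists_mem_deltaCostSet_le_add_dist {n : ℕ} {y z : Y} {c : ℝ} (x' : Y)
    (hc : c ∈ deltaCostSet S act n y z) :
    ∃ c' ∈ deltaCostSet S act n y x', c' ≤ c + dist z x' := by
  obtain ⟨ys, h0, hlast, hstep, rfl⟩ := hc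
  set ys' := Function.update ys (Fin.last n) ((ys (Fin.last n)).1, x')
  have hfst : ∀ i, (ys' i).1 = (ys i).1 := fun i => by
    by_cases hi : i = Fin.last n <;> simp [ys', hi]
  have hcast : ∀ i : Fin n, ys' i.castSucc = ys i.castSucc := fun i =>
    Function.update_of_ne (Fin.castSucc_lt_last i).ne _ _
  refine ⟨_, ⟨ys', by rw [hfst, h0], by simp [ys'], fun i => ?_, rfl⟩, ?_⟩
  · rw [hfst, hcast]
    exact hstep i
  · simp only [Fin.sum_univ_castSucc, hcast]
    have := dist_triangle (ys (Fin.last n)).1 z x'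
    simp [ys', ← hlast] at this ⊢
    linarith

end Chains

section Costs

variable {G : Type*} [Group G] {Y : Type*} [MetricSpace Y] {S : Set G} {act : G → Y → Y}

theorem deltaCost_nonneg (n : ℕ) (y y' : Y) : 0 ≤ deltaCost S act n y y' :=
  Real.sInf_nonneg fun _ hc => nonneg_of_mem_deltaCostSet hc

theorem deltaCost_le {n : ℕ} {y y' : Y} {c : ℝ} (hc : c ∈ deltaCostSet S act n y y') :
    deltaCost S act n y y' ≤ c :=
  csInf_le ⟨0, fun _ hc => nonneg_of_mem_deltaCostSet hc⟩ hc

theorem exists_list_length_eq_wordLength (hSsymm : ∀ s ∈ S, s⁻¹ ∈ S)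
    (hSgen : Subgroup.closure S = ⊤) (γ : G) :
    ∃ l : List G, (∀ a ∈ l, a ∈ S) ∧ l.length = wordLength S γ ∧ l.prod = γ := by
  have hne : {n : ℕ | ∃ f : Fin n → G, (∀ i, f i ∈ S ∨ (f i)⁻¹ ∈ S) ∧
      (List.ofFn f).prod = γ}.Nonempty := by
    have hγ : γ ∈ Submonoid.closure (S ∪ S⁻¹) := by
      rw [← Subgroup.closure_toSubmonoid, hSgen]
      trivial
    obtain ⟨l, hl, rfl⟩ := Submonoid.exists_list_of_mem_closure hγ
    refine ⟨l.length, l.get, fun i => hl _ (l.get_mem i), by rw [List.ofFn_get]⟩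
  obtain ⟨f, hf, hprod⟩ := Nat.sInf_mem hne
  refine ⟨List.ofFn f, fun a ha => ?_, List.length_ofFn, hprod⟩
  obtain ⟨i, rfl⟩ := List.mem_ofFn.mp ha
  simpa using (hf i).imp_right (hSsymm _)

theorem mem_deltaCostSet_add_length_act_prod (hact1 : ∀ z : Y, act 1 z = z)
    (hactmul : ∀ g h (z : Y), act (g * h) z = act g (act h z))
    {n : ℕ} {y z : Y} {c : ℝ} {l : List G} (hl : ∀ a ∈ l, a ∈ S)
    (hc : c ∈ deltaCostSet S act n y z) :
    c ∈ deltaCostSet S act (n + l.length) y (act l.prod z) := by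
  induction l with
  | nil => simpa [hact1] using hc
  | cons a l ih =>
    rw [List.prod_cons, hactmul, List.length_cons, ← add_assoc]
    exact mem_deltaCostSet_succ_act (hl a List.mem_cons_self)
      (ih fun b hb => hl b (List.mem_cons_of_mem a hb))

theorem exists_mem_deltaCostSet_add_wordLength (hSsymm : ∀ s ∈ S, s⁻¹ ∈ S)
    (hSgen : Subgroup.closure S = ⊤) (hact1 : ∀ z : Y, act 1 z = z)
    (hactmul : ∀ g h (z : Y), act (g * h) z = act g (act h z))
    {n : ℕ} {y z : Y} {c : ℝ} (γ : G) (x' : Y) (hc : c ∈ deltaCostSet S act n y z) :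
    ∃ c' ∈ deltaCostSet S act (n + wordLength S γ) y x', c' ≤ c + dist (act γ z) x' := by
  obtain ⟨l, hlS, hlen, rfl⟩ := exists_list_length_eq_wordLength hSsymm hSgen γ
  rw [← hlen]
  exact exists_mem_deltaCostSet_le_add_dist x'
    (mem_deltaCostSet_add_length_act_prod hact1 hactmul hlS hc)

theorem exists_mem_deltaCostSet_le_chain (hSsymm : ∀ s ∈ S, s⁻¹ ∈ S)
    (hSgen : Subgroup.closure S = ⊤) (hact1 : ∀ z : Y, act 1 z = z)
    (hactmul : ∀ g h (z : Y), act (g * h) z = act g (act h z)) :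
    ∀ {M : ℕ} (xs : Fin (M + 1) → Y) (γs : Fin M → G),
      ∃ c ∈ deltaCostSet S act (∑ i, wordLength S (γs i)) (xs 0) (xs (Fin.last M)),
        c ≤ ∑ i, dist (act (γs i) (xs i.castSucc)) (xs i.succ)
  | 0, xs, _ => ⟨0, by simpa using zero_mem_deltaCostSet_zero (xs 0), by simp⟩
  | M + 1, xs, γs => by
    obtain ⟨c, hc, hle⟩ :=
      exists_mem_deltaCostSet_le_chain hSsymm hSgen hact1 hactmul
        (fun i => xs i.castSucc) (fun i => γs i.castSucc)
    obtain ⟨c', hc', hle'⟩ := exists_mem_deltaCostSet_add_wordLength hSsymm hSgen hact1 hactmul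
      (γs (Fin.last M)) (xs (Fin.last (M + 1))) hc
    refine ⟨c', by simpa [Fin.sum_univ_castSucc] using hc', ?_⟩
    rw [Fin.sum_univ_castSucc]
    simp only [Fin.succ_castSucc, Fin.succ_last] at hle hle' ⊢
    linarith

theorem wordLength_mem_chainSums {γ : G} {y y' : Y} (hγ : act γ y = y') (s : ℝ) :
    (wordLength S γ : ℝ) ∈ chainSums S act (fun a b => s * dist a b) y y' :=
  ⟨1, ![y, y'], ![γ], rfl, rfl, by simp [hγ]⟩

/-- One half of `d_s(y, y') = min_n (n + s δ_n(y, y'))`. -/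
theorem exists_add_mul_deltaCost_le_of_mem_chainSums (hSsymm : ∀ s ∈ S, s⁻¹ ∈ S)
    (hSgen : Subgroup.closure S = ⊤) (hact1 : ∀ z : Y, act 1 z = z)
    (hactmul : ∀ g h (z : Y), act (g * h) z = act g (act h z))
    {s : ℝ} (hs : 0 ≤ s) {y y' : Y} {c : ℝ}
    (hc : c ∈ chainSums S act (fun a b => s * dist a b) y y') :
    ∃ n : ℕ, n + s * deltaCost S act n y y' ≤ c := by
  obtain ⟨M, xs, γs, rfl, rfl, rfl⟩ := hc
  obtain ⟨d, hd, hle⟩ := exists_mem_deltaCostSet_le_chain hSsymm hSgen hact1 hactmul xs γs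
  refine ⟨∑ i, wordLength S (γs i), ?_⟩
  rw [Finset.sum_add_distrib, ← Finset.mul_sum, Nat.cast_sum]
  gcongr
  exact (deltaCost_le hd).trans hle

end Costs

theorem warped_metric_stabilizes_on_orbit_general {Y : Type*} [MetricSpace Y]
    {G : Type*} [Group G] (S : Set G) (hSsymm : ∀ s ∈ S, s⁻¹ ∈ S)
    (hSgen : Subgroup.closure S = ⊤)
    (act : G → Y → Y)
    (hact1 : ∀ y, act 1 y = y) (hactmul : ∀ g h y, act (g * h) y = act g (act h y))
    (y y' : Y) (N : ℕ)
    (hreach : ∃ γ : G, act γ y = y' ∧ wordLength S γ = N)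
    (hpos : ∀ n : ℕ, n < N → 0 < deltaCost S act n y y') :
    ∀ s : ℝ, 1 ≤ s → (∀ n : ℕ, n < N → ((N : ℝ) - n) / deltaCost S act n y y' ≤ s) →
      warpDist S act (fun a b => s * dist a b) y y' = N := by
  intro s hs hsmax
  have hs0 : 0 ≤ s := zero_le_one.trans hs
  obtain ⟨γ, hγ, rfl⟩ := hreach
  have hmem := wordLength_mem_chainSums (S := S) hγ s
  have hlow : ∀ c ∈ chainSums S act (fun a b => s * dist a b) y y', (wordLength S γ : ℝ) ≤ c := by
    intro c hc
    obtain ⟨n, hn⟩ :=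
      exists_add_mul_deltaCost_le_of_mem_chainSums hSsymm hSgen hact1 hactmul hs0 hc
    rcases lt_or_ge n (wordLength S γ) with hlt | hge
    · have := (div_le_iff₀ (hpos n hlt)).1 (hsmax n hlt)
      linarith
    · have : (wordLength S γ : ℝ) ≤ n := by exact_mod_cast hge
      have := mul_nonneg hs0 (deltaCost_nonneg (S := S) (act := act) n y y')
      linarith
  exact le_antisymm (csInf_le ⟨_, hlow⟩ hmem) (le_csInf ⟨_, hmem⟩ hlow)

/-- if `y' = γy` with `N` the minimal word length of such `γ`, and
`δ_n(y,y') > 0` for all `n < N`, then `d_s(y,y') = N` for all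
`s ≥ max_{n<N} (N−n)/δ_n(y,y')`. -/
theorem warped_metric_stabilizes_on_orbit {Y : Type*} [MetricSpace Y] [ProperSpace Y]
    {G : Type*} [Group G] (S : Set G) (hSfin : S.Finite) (hSsymm : ∀ s ∈ S, s⁻¹ ∈ S)
    (hS1 : (1 : G) ∈ S) (hSgen : Subgroup.closure S = ⊤)
    (act : G → Y → Y)
    (hact1 : ∀ y, act 1 y = y) (hactmul : ∀ g h y, act (g * h) y = act g (act h y))
    (hcont : ∀ g, Continuous (act g))
    (y y' : Y) (N : ℕ)
    (hreach : ∃ γ : G, act γ y = y' ∧ wordLength S γ = N)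
    (hmin : ∀ γ : G, act γ y = y' → N ≤ wordLength S γ)
    (hpos : ∀ n : ℕ, n < N → 0 < deltaCost S act n y y') :
    ∀ s : ℝ, 1 ≤ s → (∀ n : ℕ, n < N → ((N : ℝ) - n) / deltaCost S act n y y' ≤ s) →
      warpDist S act (fun a b => s * dist a b) y y' = N :=
  warped_metric_stabilizes_on_orbit_general S hSsymm hSgen act hact1 hactmul y y' N hreach hpos
end
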